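/- arXiv:1502.00151 — 4 statements merged into one kernel-verified Lean document; each statement's English description precedes it below -/
import Mathlib

section
/- For every nontrivial connected graph G of order n ≥ 5 and every integer k with 2 ≤ k ≤ n, we have 0 ≤ rvx_k(G) ≤ n − 2. -/
/-- A vertex-coloring `c` makes `G` vertex-rainbow `k`-tree-connected using at most `m`
colors (on Steiner vertices): every `k`-subset `S` of vertices admits a connected subgraph
(equivalently, a Steiner tree) containing `S` whose vertices outside `S` receive pairwise
distinct colors, all drawn from a palette of `m` colors. -/
def hasRvxColoring {V : Type*} (G : SimpleGraph V) (k m : ℕ) : Prop :=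
  ∃ c : V → ℕ, ∀ S : Finset V, S.card = k →
    ∃ T : G.Subgraph, T.Connected ∧ ↑S ⊆ T.verts ∧
      Set.InjOn c (T.verts \ ↑S) ∧ ∀ v ∈ T.verts \ (↑S : Set V), c v < m

/-- The `k`-vertex-rainbow index `rvx_k(G)`. -/
noncomputable def rvx {V : Type*} (G : SimpleGraph V) (k : ℕ) : ℕ :=
  sInf {m | hasRvxColoring G k m}

/-- The Steiner distance of a vertex set `S`: the minimum number of edges of a connected
subgraph of `G` containing `S`. -/
noncomputable def steinerDist {V : Type*} (G : SimpleGraph V) (S : Set V) : ℕ :=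
  sInf {m | ∃ T : G.Subgraph, T.Connected ∧ S ⊆ T.verts ∧ T.edgeSet.ncard = m}

/-- The Steiner `k`-diameter of `G`. -/
noncomputable def sdiam {V : Type*} [Fintype V] [DecidableEq V]
    (G : SimpleGraph V) (k : ℕ) : ℕ :=
  (Finset.univ.powersetCard k).sup fun S : Finset V => steinerDist G (S : Set V)

/-- `t(n,k,ℓ)`: the minimal number of edges of a connected graph of order `n`
with `rvx_k(G) ≤ ℓ`. -/
noncomputable def minSize (n k l : ℕ) : ℕ :=
  sInf {m | ∃ G : SimpleGraph (Fin n), G.Connected ∧ rvx G k ≤ l ∧ G.edgeSet.ncard = m}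

/-!
Take a spanning tree of `G` and two of its leaves `u ≠ w`. A path of the tree meets a leaf only
at its ends, so for every `S` the subgraph induced on `S ∪ (V \ {u, w})` is connected; its
vertices outside `S` lie in `V \ {u, w}`, which can be colored injectively with `n - 2` colors.
-/

namespace SimpleGraph

variable {V : Type*} {G : SimpleGraph V}

lemma Subgraph.connected_induce_of_subsingleton_neighborSet {H : SimpleGraph V} (hHG : H ≤ G)
    (hH : H.Preconnected) {s : Set V} (hs : s.Nonempty)
    (hleaf : ∀ v ∉ s, (H.neighborSet v).Subsingleton) :
    ((⊤ : G.Subgraph).induce s).Connected := by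
  refine (Subgraph.connected_iff_forall_exists_walk_subgraph _).2 ⟨hs, fun {a b} ha hb => ?_⟩
  obtain ⟨p, hp⟩ := hH.exists_isPath a b
  refine ⟨p.mapLe hHG, (Walk.toSubgraph_le_induce_support _).trans
    (Subgraph.induce_mono_right fun v hv => ?_)⟩
  replace hv : v ∈ p.support := by simpa using hv
  by_contra hvs
  exact hp.isTrail.not_mem_support_of_subsingleton_neighborSet (by rintro rfl; exact hvs ha)
    (by rintro rfl; exact hvs hb) (hleaf v hvs) hv

lemma Connected.exists_ne_forall_connected_induce [Finite V] [Nontrivial V] (hG : G.Connected) :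
    ∃ u w, u ≠ w ∧ ∀ s : Set V, s.Nonempty → (∀ v ∉ s, v = u ∨ v = w) →
      ((⊤ : G.Subgraph).induce s).Connected := by
  classical
  have := Fintype.ofFinite V
  obtain ⟨T, hTG, hT⟩ := hG.exists_isTree_le
  obtain ⟨u, w, huw, hu, hw⟩ := hT.exists_ne_and_degree_eq_one
  have hleaf {v : V} (hv : T.degree v = 1) : (T.neighborSet v).Subsingleton := fun a ha b hb =>
    (degree_eq_one_iff_existsUnique_adj.1 hv).unique ha hb
  refine ⟨u, w, huw, fun s hs hsuw => ?_⟩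
  refine Subgraph.connected_induce_of_subsingleton_neighborSet hTG hT.connected.preconnected hs
    fun v hv => ?_
  rcases hsuw v hv with rfl | rfl
  exacts [hleaf hu, hleaf hw]

end SimpleGraph

lemma Finset.exists_injOn_lt_card {V : Type*} (A : Finset V) :
    ∃ c : V → ℕ, Set.InjOn c A ∧ ∀ v ∈ A, c v < A.card := by
  classical
  refine ⟨fun v => if h : v ∈ A then A.equivFin ⟨v, h⟩ else 0, fun a ha b hb hab => ?_,
    fun v hv => by simp [hv]⟩
  simp only [Finset.mem_coe] at ha hb
  simpa [ha, hb, Fin.val_inj] using hab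

lemma rvx_le_card {V : Type*} {G : SimpleGraph V} {k : ℕ} (A : Finset V)
    (h : ∀ S : Finset V, S.card = k →
      ∃ T : G.Subgraph, T.Connected ∧ ↑S ⊆ T.verts ∧ T.verts \ ↑S ⊆ ↑A) :
    rvx G k ≤ A.card := by
  obtain ⟨c, hinj, hlt⟩ := A.exists_injOn_lt_card
  refine Nat.sInf_le ⟨c, fun S hS => ?_⟩
  obtain ⟨T, hT, hST, hA⟩ := h S hS
  exact ⟨T, hT, hST, hinj.mono hA, fun v hv => hlt v (hA hv)⟩

theorem rvx_le_card_sub_two_general {V : Type*} [Fintype V] (G : SimpleGraph V) (hconn : G.Connected)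
    (n : ℕ) (hn : n = Fintype.card V) (hn5 : 5 ≤ n)
    (k : ℕ) :
    rvx G k ≤ n - 2 := by
  classical
  have : Nontrivial V := Fintype.one_lt_card_iff_nontrivial.1 (by omega)
  obtain ⟨u, w, huw, hind⟩ := hconn.exists_ne_forall_connected_induce
  set A : Finset V := {u, w}ᶜ
  have hA : A.card = n - 2 := by rw [Finset.card_compl, Finset.card_pair huw, hn]
  obtain ⟨a, ha⟩ : A.Nonempty := Finset.card_pos.1 (by omega)
  refine hA ▸ rvx_le_card A fun S _ => ⟨(⊤ : G.Subgraph).induce (↑S ∪ ↑A),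
    hind _ ⟨a, Or.inr ha⟩ fun v hv => ?_, Set.subset_union_left, Set.sdiff_subset_iff.2 subset_rfl⟩
  · simp only [A, Set.mem_union, Finset.mem_coe, Finset.mem_compl, Finset.mem_insert,
      Finset.mem_singleton] at hv
    tauto

/-- for a connected graph of order `n ≥ 5` and `2 ≤ k ≤ n`,
`0 ≤ rvx_k(G) ≤ n - 2`. -/
theorem rvx_le_card_sub_two {V : Type*} [Fintype V] (G : SimpleGraph V) (hconn : G.Connected)
    (n : ℕ) (hn : n = Fintype.card V) (hn5 : 5 ≤ n)
    (k : ℕ) (hk : 2 ≤ k) (hk' : k ≤ n) :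
    rvx G k ≤ n - 2 :=
  rvx_le_card_sub_two_general G hconn n hn hn5 k
end

section
/- Let G be a connected graph of order n ≥ 3. Then the following are equivalent: (1) rvx_3(G) = 0; (2) sdiam_3(G) = 2; (3) the minimum degree of G satisfies n−2 ≤ δ(G) ≤ n−1. -/
/-!
Both `rvx_3(G) = 0` and `sdiam_3(G) = 2` say that every 3-set `S` spans a connected subgraph on
`S` itself: for `rvx` because a palette of no colours forbids Steiner vertices, for `sdiam`
because a connected subgraph with at most two edges has at most three vertices. A 3-set spans a
connected subgraph exactly when one of its vertices is adjacent to the other two, and this holds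
for every 3-set iff every vertex has at most one non-neighbour, i.e. `δ(G) ≥ n - 2`.
-/

namespace SimpleGraph

variable {V : Type*} {G : SimpleGraph V}

/-- Every vertex has at most one non-neighbour other than itself, i.e. `Gᶜ` is a matching. -/
def AtMostOneNonNeighbor (G : SimpleGraph V) : Prop :=
  ∀ ⦃u v w : V⦄, u ≠ v → u ≠ w → v ≠ w → G.Adj u v ∨ G.Adj u w

lemma Subgraph.Connected.ncard_verts_le_ncard_edgeSet_add_one {T : G.Subgraph}
    (hT : T.Connected) : T.verts.ncard ≤ T.edgeSet.ncard + 1 := by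
  have h := hT.coe.card_vert_le_card_edgeSet_add_one
  rwa [Nat.card_coe_set_eq, Nat.card_coe_set_eq, ← Set.ncard_image_of_injective _
    (Sym2.map.injective Subtype.coe_injective), Subgraph.image_coe_edgeSet_coe] at h

lemma Subgraph.connected_top (hG : G.Connected) : (⊤ : G.Subgraph).Connected :=
  Subgraph.connected_iff'.mpr (Subgraph.topIso.connected_iff.mpr hG)

lemma adj_or_adj_of_connected_of_verts_subset {T : G.Subgraph} (hT : T.Connected)
    {u v w : V} (hsub : T.verts ⊆ {u, v, w}) (hu : u ∈ T.verts) (hv : v ∈ T.verts)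
    (huv : u ≠ v) : G.Adj u v ∨ G.Adj u w := by
  have : Nontrivial T.verts := Set.nontrivial_coe_sort.mpr ⟨u, hu, v, hv, huv⟩
  obtain ⟨x, hux⟩ := hT.preconnected.exists_adj_of_nontrivial ⟨u, hu⟩
  rcases hsub (T.edge_vert hux.symm) with rfl | rfl | rfl
  · exact absurd (T.adj_sub hux) G.irrefl
  · exact .inl (T.adj_sub hux)
  · exact .inr (T.adj_sub hux)

lemma exists_connected_subgraph_of_adj_of_adj {x y z : V} (hxy : G.Adj x y) (hxz : G.Adj x z)
    (hyz : y ≠ z) :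
    ∃ T : G.Subgraph, T.Connected ∧ T.verts = {x, y, z} ∧ T.edgeSet.ncard = 2 := by
  refine ⟨G.subgraphOfAdj hxy ⊔ G.subgraphOfAdj hxz, ?_, ?_, ?_⟩
  · exact Subgraph.connected_sup (Subgraph.subgraphOfAdj_connected hxy).preconnected
      (Subgraph.subgraphOfAdj_connected hxz).preconnected ⟨x, by simp⟩
  · ext a; simp; tauto
  · rw [Subgraph.edgeSet_sup, edgeSet_subgraphOfAdj, edgeSet_subgraphOfAdj,
      Set.singleton_union, Set.ncard_pair]
    simp [hyz, hxz.ne]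

lemma AtMostOneNonNeighbor.exists_connected_subgraph (h : G.AtMostOneNonNeighbor)
    {u v w : V} (huv : u ≠ v) (huw : u ≠ w) (hvw : v ≠ w) :
    ∃ T : G.Subgraph, T.Connected ∧ T.verts = {u, v, w} ∧ T.edgeSet.ncard = 2 := by
  rcases h huv huw hvw with huv' | huw'
  · rcases h huw.symm hvw.symm huv with hwu | hwv
    · exact exists_connected_subgraph_of_adj_of_adj huv' hwu.symm hvw
    · rw [Set.insert_comm]
      exact exists_connected_subgraph_of_adj_of_adj huv'.symm hwv.symm huw
  · rcases h huv.symm hvw huw with hvu | hvw'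
    · exact exists_connected_subgraph_of_adj_of_adj hvu.symm huw' hvw
    · rw [Set.pair_comm, Set.insert_comm]
      exact exists_connected_subgraph_of_adj_of_adj huw'.symm hvw'.symm huv

lemma hasRvxColoring_card [Fintype V] (hG : G.Connected) (k : ℕ) :
    hasRvxColoring G k (Fintype.card V) :=
  ⟨fun v => Fintype.equivFin V v, fun _ _ => ⟨⊤, Subgraph.connected_top hG, by simp,
    fun _ _ _ _ h => (Fintype.equivFin V).injective (Fin.val_injective h),
    fun v _ => (Fintype.equivFin V v).isLt⟩⟩

lemma hasRvxColoring_three_zero_iff : hasRvxColoring G 3 0 ↔ G.AtMostOneNonNeighbor := by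
  classical
  constructor
  · rintro ⟨c, hc⟩ u v w huv huw hvw
    obtain ⟨T, hT, hST, -, hcolor⟩ :=
      hc {u, v, w} (Finset.card_eq_three.mpr ⟨u, v, w, huv, huw, hvw, rfl⟩)
    have hTS : T.verts ⊆ {u, v, w} := fun a ha => by
      by_contra hna
      exact Nat.not_lt_zero _ (hcolor a ⟨ha, by simpa using hna⟩)
    exact adj_or_adj_of_connected_of_verts_subset hT hTS (hST (by simp)) (hST (by simp)) huv
  · refine fun h => ⟨fun _ => 0, fun S hS => ?_⟩
    obtain ⟨u, v, w, huv, huw, hvw, rfl⟩ := Finset.card_eq_three.mp hS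
    obtain ⟨T, hT, hTv, -⟩ := h.exists_connected_subgraph huv huw hvw
    exact ⟨T, hT, by simp [hTv], by simp [hTv], by simp [hTv]⟩

lemma rvx_three_eq_zero_iff [Finite V] (hG : G.Connected) :
    rvx G 3 = 0 ↔ G.AtMostOneNonNeighbor := by
  have := Fintype.ofFinite V
  rw [rvx, Nat.sInf_eq_zero, ← hasRvxColoring_three_zero_iff, Set.mem_ofPred_eq]
  exact or_iff_left (Set.nonempty_iff_ne_empty.mp ⟨_, hasRvxColoring_card hG 3⟩)

lemma steinerDist_le_ncard_edgeSet {S : Set V} {T : G.Subgraph} (hT : T.Connected)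
    (hS : S ⊆ T.verts) : steinerDist G S ≤ T.edgeSet.ncard :=
  Nat.sInf_le ⟨T, hT, hS, rfl⟩

lemma Connected.exists_subgraph_ncard_edgeSet_eq_steinerDist (hG : G.Connected) (S : Set V) :
    ∃ T : G.Subgraph, T.Connected ∧ S ⊆ T.verts ∧ T.edgeSet.ncard = steinerDist G S :=
  Nat.sInf_mem
    (s := {m | ∃ T : G.Subgraph, T.Connected ∧ S ⊆ T.verts ∧ T.edgeSet.ncard = m})
    ⟨_, ⊤, Subgraph.connected_top hG, by simp, rfl⟩

lemma Connected.ncard_le_steinerDist_add_one [Finite V] (hG : G.Connected) (S : Set V) :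
    S.ncard ≤ steinerDist G S + 1 := by
  obtain ⟨T, hT, hST, hcard⟩ := hG.exists_subgraph_ncard_edgeSet_eq_steinerDist S
  calc S.ncard ≤ T.verts.ncard := Set.ncard_le_ncard hST
    _ ≤ steinerDist G S + 1 := hcard ▸ hT.ncard_verts_le_ncard_edgeSet_add_one

lemma Connected.adj_or_adj_of_steinerDist_le_two [Finite V] (hG : G.Connected) {u v w : V}
    (huv : u ≠ v) (huw : u ≠ w) (hvw : v ≠ w) (h : steinerDist G {u, v, w} ≤ 2) :
    G.Adj u v ∨ G.Adj u w := by
  obtain ⟨T, hT, hST, hcard⟩ := hG.exists_subgraph_ncard_edgeSet_eq_steinerDist {u, v, w}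
  have hTS : T.verts = {u, v, w} := by
    refine (Set.eq_of_subset_of_ncard_le hST ?_ (Set.toFinite _)).symm
    rw [Set.ncard_eq_three.mpr ⟨u, v, w, huv, huw, hvw, rfl⟩]
    have := hT.ncard_verts_le_ncard_edgeSet_add_one
    omega
  exact adj_or_adj_of_connected_of_verts_subset hT hTS.le (hST (by simp)) (hST (by simp)) huv

lemma AtMostOneNonNeighbor.steinerDist_eq_two [Finite V] (h : G.AtMostOneNonNeighbor)
    (hG : G.Connected) {u v w : V} (huv : u ≠ v) (huw : u ≠ w) (hvw : v ≠ w) :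
    steinerDist G {u, v, w} = 2 := by
  obtain ⟨T, hT, hTv, hcard⟩ := h.exists_connected_subgraph huv huw hvw
  have hlower := hG.ncard_le_steinerDist_add_one {u, v, w}
  rw [Set.ncard_eq_three.mpr ⟨u, v, w, huv, huw, hvw, rfl⟩] at hlower
  have hupper := hcard ▸ steinerDist_le_ncard_edgeSet hT hTv.ge
  omega

lemma Connected.sdiam_three_eq_two_iff [Fintype V] [DecidableEq V] (hG : G.Connected)
    (hV : 3 ≤ Fintype.card V) : sdiam G 3 = 2 ↔ G.AtMostOneNonNeighbor := by
  constructor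
  · intro h u v w huv huw hvw
    refine hG.adj_or_adj_of_steinerDist_le_two huv huw hvw (h ▸ ?_)
    have hS : ({u, v, w} : Finset V) ∈ Finset.univ.powersetCard 3 :=
      Finset.mem_powersetCard.mpr ⟨Finset.subset_univ _,
        Finset.card_eq_three.mpr ⟨u, v, w, huv, huw, hvw, rfl⟩⟩
    simpa [sdiam] using Finset.le_sup (f := fun S : Finset V => steinerDist G S) hS
  · intro h
    have hS : ∀ S ∈ (Finset.univ : Finset V).powersetCard 3, steinerDist G (S : Set V) = 2 := by
      intro S hS
      obtain ⟨u, v, w, huv, huw, hvw, rfl⟩ :=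
        Finset.card_eq_three.mp (Finset.mem_powersetCard.mp hS).2
      simpa using h.steinerDist_eq_two hG huv huw hvw
    rw [sdiam, Finset.sup_congr rfl hS,
      Finset.sup_const (Finset.powersetCard_nonempty.mpr (by simpa))]

section Degree

variable [Fintype V] [DecidableEq V] [DecidableRel G.Adj]

lemma atMostOneNonNeighbor_iff_forall_degree_compl_le_one :
    G.AtMostOneNonNeighbor ↔ ∀ v, Gᶜ.degree v ≤ 1 := by
  simp only [← card_neighborFinset_eq_degree, Finset.card_le_one, mem_neighborFinset, compl_adj]
  constructor
  · intro h u v ⟨huv, hnuv⟩ w ⟨huw, hnuw⟩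
    by_contra hvw
    exact (h huv huw hvw).elim hnuv hnuw
  · intro h u v w huv huw hvw
    by_contra! hn
    exact hvw (h u v ⟨huv, hn.1⟩ w ⟨huw, hn.2⟩)

lemma atMostOneNonNeighbor_iff_le_minDegree [Nonempty V] :
    G.AtMostOneNonNeighbor ↔ Fintype.card V - 2 ≤ G.minDegree := by
  rw [atMostOneNonNeighbor_iff_forall_degree_compl_le_one]
  refine ⟨fun h => G.le_minDegree_of_forall_le_degree _ fun v => ?_, fun h v => ?_⟩
  · have := h v
    rw [degree_compl] at this
    have := G.degree_lt_card_verts v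
    omega
  · rw [degree_compl]
    have := G.minDegree_le_degree v
    omega

end Degree

end SimpleGraph

/-- for a connected graph of order `n ≥ 3`, the conditions `rvx_3(G) = 0`,
`sdiam_3(G) = 2`, and `n - 2 ≤ δ(G) ≤ n - 1` are equivalent. -/
theorem rvx_three_eq_zero_tfae {V : Type*} [Fintype V] [DecidableEq V] (G : SimpleGraph V)
    [DecidableRel G.Adj] (n : ℕ) (hn : n = Fintype.card V) (hn3 : 3 ≤ n)
    (hconn : G.Connected) :
    (rvx G 3 = 0 ↔ sdiam G 3 = 2) ∧
    (rvx G 3 = 0 ↔ (n - 2 ≤ G.minDegree ∧ G.minDegree ≤ n - 1)) := by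
  subst hn
  have : Nonempty V := Fintype.card_pos_iff.mp (by omega)
  rw [SimpleGraph.rvx_three_eq_zero_iff hconn, hconn.sdiam_three_eq_two_iff hn3,
    SimpleGraph.atMostOneNonNeighbor_iff_le_minDegree]
  exact ⟨Iff.rfl, (and_iff_left (Nat.le_sub_one_of_lt G.minDegree_lt_card)).symm⟩
end

section
/- If G and \bar{G} are both connected graphs of order 5, then rvx_3(G) + rvx_3(\bar{G}) ≤ 4. -/
/-!
Let `c(G)` be the number of cut vertices of `G`. When `|V| = k + 2`, a `k`-set `S` misses just two
vertices `x, y`; if `x` is not a cut vertex, `G - x` is a Steiner tree for `S` whose only extra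
vertex is `y`, and otherwise the whole of `G` works once `x, y` get distinct colours. Hence any
colouring that is injective on the cut vertices is good, and `rvx_k(G) ≤ max 1 c(G)`.

Two leaves of a spanning tree are non-cut vertices, so `c(G) ≤ 3` on five vertices. Suppose `d` is
a cut vertex of `Ḡ`, and `x ≠ x'` are cut vertices of `G` neither of which is the only neighbour
of `d` (neither is `d`, since `G - d` and `Ḡ - d` are not both disconnected). Then `G - d - x` is disconnected, so its complement `Ḡ - d - x` is connected, and likewise
for `x'`; with a fifth vertex in common these glue to a connected `Ḡ - d`, a contradiction. So
`c(G) ≤ 2` as soon as `c(Ḡ) > 0`, and symmetrically, whence `max 1 c(G) + max 1 c(Ḡ) ≤ 4`.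
-/

open Finset

lemma Finset.exists_injOn_lt_max_one_card {α : Type*} (s : Finset α) :
    ∃ c : α → ℕ, Set.InjOn c s ∧ ∀ a, c a < max 1 #s := by
  classical
  refine ⟨fun a => if h : a ∈ s then s.equivFin ⟨a, h⟩ else 0, ?_, fun a => ?_⟩
  · intro a ha b hb hab
    simp only [mem_coe] at ha hb
    simpa [ha, hb, Fin.val_inj] using hab
  · dsimp only
    split_ifs
    · exact lt_max_of_lt_right (Fin.is_lt _)
    · exact lt_max_of_lt_left one_pos

namespace SimpleGraph

variable {V : Type*} {G : SimpleGraph V}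

/-- With this convention the vertex of a one-vertex graph is a cut vertex. -/
def IsCutVertex (G : SimpleGraph V) (v : V) : Prop := ¬(G.induce {v}ᶜ).Connected

open Classical in
noncomputable def cutVertices [Fintype V] (G : SimpleGraph V) : Finset V := {v | G.IsCutVertex v}

@[simp]
lemma mem_cutVertices [Fintype V] {v : V} : v ∈ G.cutVertices ↔ G.IsCutVertex v := by
  simp [cutVertices]

lemma induce_compl (s : Set V) : Gᶜ.induce s = (G.induce s)ᶜ := by
  ext a b
  simp [Subtype.ext_iff]

lemma connected_induce_compl_of_not_connected {s : Set V} (hs : s.Nonempty)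
    (h : ¬(G.induce s).Connected) : (Gᶜ.induce s).Connected := by
  have : Nonempty s := hs.to_subtype
  rw [induce_compl]
  exact (G.induce s).connected_or_connected_compl.resolve_left h

lemma IsCutVertex.not_isCutVertex_compl [Nontrivial V] {v : V} (h : G.IsCutVertex v) :
    ¬Gᶜ.IsCutVertex v :=
  not_not.mpr <| connected_induce_compl_of_not_connected (exists_ne v) h

lemma Connected.exists_ne_not_isCutVertex [Finite V] [Nontrivial V] (hG : G.Connected) :
    ∃ u v, u ≠ v ∧ ¬G.IsCutVertex u ∧ ¬G.IsCutVertex v := by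
  have := Fintype.ofFinite V
  classical
  obtain ⟨T, hTG, hT⟩ := hG.exists_isTree_le
  obtain ⟨u, v, huv, hu, hv⟩ := hT.exists_ne_and_degree_eq_one
  refine ⟨u, v, huv, not_not.mpr ?_, not_not.mpr ?_⟩
  · exact (hT.connected.induce_compl_singleton_of_degree_eq_one hu).mono (fun _ _ h => hTG h)
  · exact (hT.connected.induce_compl_singleton_of_degree_eq_one hv).mono (fun _ _ h => hTG h)

lemma Connected.card_cutVertices_le [Fintype V] [Nontrivial V] (hG : G.Connected) : #G.cutVertices ≤ Fintype.card V - 2 := by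
  classical
  obtain ⟨u, v, huv, hu, hv⟩ := hG.exists_ne_not_isCutVertex
  calc #G.cutVertices ≤ #({u, v} : Finset V)ᶜ := card_le_card fun w hw => by
        have := mem_cutVertices.mp hw
        simp only [mem_compl, mem_insert, mem_singleton, not_or]
        exact ⟨fun h => hu (h ▸ this), fun h => hv (h ▸ this)⟩
    _ = Fintype.card V - 2 := by rw [card_compl, card_pair huv]

lemma connected_induce_compl_singleton_of_adj {d x y : V} (hdx : d ≠ x)
    (h : (G.induce {d, x}ᶜ).Connected) (hy : y ∉ ({d, x} : Set V)) (hdy : G.Adj d y) :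
    (G.induce {x}ᶜ).Connected := by
  have := connected_induce_union (t := {d}) h.preconnected .of_subsingleton hy rfl hdy.symm
  have hset : ({d, x}ᶜ ∪ {d} : Set V) = {x}ᶜ := by
    ext v
    by_cases v = d <;> simp_all
  rwa [hset] at this

lemma not_isCutVertex_or_of_isCutVertex_compl {d x x' y z : V} (hd : Gᶜ.IsCutVertex d)
    (hxx' : x ≠ x') (hdx : d ≠ x) (hdx' : d ≠ x') (hdy : G.Adj d y) (hyx : y ≠ x)
    (hyx' : y ≠ x') (hz : z ∉ ({d, x, x'} : Set V)) :
    ¬G.IsCutVertex x ∨ ¬G.IsCutVertex x' := by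
  have hcompl : ∀ w, d ≠ w → y ≠ w → z ≠ w → G.IsCutVertex w →
      (Gᶜ.induce {d, w}ᶜ).Connected := by
    intro w hdw hyw hzw hw
    refine connected_induce_compl_of_not_connected ⟨z, by simp_all⟩ fun h => hw ?_
    exact connected_induce_compl_singleton_of_adj hdw h (by simp [hyw, hdy.ne.symm]) hdy
  simp only [Set.mem_insert_iff, Set.mem_singleton_iff, not_or] at hz
  by_contra! h
  have := induce_union_connected
    (hcompl x hdx hyx hz.2.1 h.1).preconnected
    (hcompl x' hdx' hyx' hz.2.2 h.2).preconnected ⟨z, by simp [hz]⟩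
  have hset : ({d, x}ᶜ ∪ {d, x'}ᶜ : Set V) = {d}ᶜ := by
    ext v
    by_cases v = x <;> simp_all
  exact hd (by rwa [hset] at this)

lemma Connected.card_cutVertices_le_two_of_isCutVertex_compl [Fintype V]
    (hV : 4 ≤ Fintype.card V) (hG : G.Connected) {d : V} (hd : Gᶜ.IsCutVertex d) :
    #G.cutVertices ≤ 2 := by
  classical
  have : Nontrivial V := Fintype.one_lt_card_iff_nontrivial.mp (by omega)
  obtain ⟨y, hdy⟩ := hG.preconnected.exists_adj_of_nontrivial d
  have hne : ∀ v ∈ G.cutVertices, d ≠ v := fun v hv hdv =>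
    (mem_cutVertices.mp hv).not_isCutVertex_compl (hdv ▸ hd)
  have hpair : ∀ x ∈ G.cutVertices, ∀ x' ∈ G.cutVertices, x ≠ x' → y ≠ x → y ≠ x' → False := by
    intro x hx x' hx' hxx' hyx hyx'
    obtain ⟨z, -, hz⟩ := exists_mem_notMem_of_card_lt_card (s := {d, x, x'}) (t := univ)
      (by have := card_le_three (a := d) (b := x) (c := x'); rw [card_univ]; omega)
    rcases not_isCutVertex_or_of_isCutVertex_compl hd hxx' (hne x hx) (hne x' hx') hdy hyx hyx'
      (by simpa using hz) with h | h
    · exact h (mem_cutVertices.mp hx)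
    · exact h (mem_cutVertices.mp hx')
  by_contra! h
  obtain ⟨a, ha, b, hb, c, hc, hab, hac, hbc⟩ := two_lt_card.mp h
  by_cases hya : y = a
  · exact hpair b hb c hc hbc (hya ▸ hab) (hya ▸ hac)
  by_cases hyb : y = b
  · exact hpair a ha c hc hac hya (hyb ▸ hbc)
  exact hpair a ha b hb hab hya hyb

theorem max_one_card_cutVertices_add_compl_le_four [Fintype V] (hV : Fintype.card V = 5)
    (h1 : G.Connected) (h2 : Gᶜ.Connected) :
    max 1 #G.cutVertices + max 1 #Gᶜ.cutVertices ≤ 4 := by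
  have : Nontrivial V := Fintype.one_lt_card_iff_nontrivial.mp (by omega)
  have hG := h1.card_cutVertices_le
  have hGc := h2.card_cutVertices_le
  rcases G.cutVertices.eq_empty_or_nonempty with hempty | ⟨e, he⟩
  · simp only [hempty, card_empty]
    omega
  rcases Gᶜ.cutVertices.eq_empty_or_nonempty with hempty | ⟨d, hd⟩
  · simp only [hempty, card_empty]
    omega
  have hG2 := h1.card_cutVertices_le_two_of_isCutVertex_compl (by omega) (mem_cutVertices.mp hd)
  have hGc2 := h2.card_cutVertices_le_two_of_isCutVertex_compl (by omega)
    (by rwa [compl_compl, ← mem_cutVertices])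
  omega

end SimpleGraph

section rvx

open SimpleGraph

variable {V : Type*} {G : SimpleGraph V}

lemma exists_steiner_subgraph_of_connected_induce {S : Finset V} {W : Set V} {c : V → ℕ}
    {m : ℕ} (hW : (G.induce W).Connected) (hSW : ↑S ⊆ W) (hinj : Set.InjOn c (W \ ↑S))
    (hlt : ∀ v, c v < m) :
    ∃ T : G.Subgraph, T.Connected ∧ ↑S ⊆ T.verts ∧
      Set.InjOn c (T.verts \ ↑S) ∧ ∀ v ∈ T.verts \ (↑S : Set V), c v < m :=
  ⟨(⊤ : G.Subgraph).induce W, connected_induce_iff.mp hW, hSW, hinj, fun v _ => hlt v⟩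

theorem hasRvxColoring_of_injOn_cutVertex [Fintype V] {k m : ℕ} (hG : G.Connected)
    (hV : Fintype.card V = k + 2) {c : V → ℕ} (hc : Set.InjOn c {v | G.IsCutVertex v})
    (hlt : ∀ v, c v < m) : hasRvxColoring G k m := by
  classical
  refine ⟨c, fun S hS => ?_⟩
  obtain ⟨x, y, hxy, hSc⟩ := card_eq_two.mp (show #Sᶜ = 2 by rw [card_compl, hS, hV]; omega)
  have hout : ∀ v, v ∉ S ↔ v = x ∨ v = y := fun v => by
    rw [← mem_compl, hSc, mem_insert, mem_singleton]
  by_cases hcut : G.IsCutVertex x ∧ G.IsCutVertex y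
  · have hcxy : c x ≠ c y := fun h => hxy (hc hcut.1 hcut.2 h)
    refine exists_steiner_subgraph_of_connected_induce
      ((induceUnivIso G).connected_iff.mpr hG) (Set.subset_univ _) ?_ hlt
    have hset : (Set.univ \ ↑S : Set V) = {x, y} := by
      ext v
      simpa using hout v
    rw [hset]
    exact Set.injOn_pair.mpr fun h => absurd h hcxy
  obtain ⟨u, w, huw, hu⟩ : ∃ u w, (∀ v, v ∉ S ↔ v = u ∨ v = w) ∧ ¬G.IsCutVertex u := by
    rcases not_and_or.mp hcut with h | h
    · exact ⟨x, y, hout, h⟩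
    · exact ⟨y, x, fun v => (hout v).trans or_comm, h⟩
  refine exists_steiner_subgraph_of_connected_induce (not_not.mp hu) ?_ ?_ hlt
  · intro v hv hvu
    exact (huw v).mpr (Or.inl hvu) hv
  · refine ((Set.subsingleton_singleton (a := w)).anti fun v hv => ?_).injOn c
    have := (huw v).mp hv.2
    simp_all

theorem rvx_le_max_one_card_cutVertices [Fintype V] {k : ℕ} (hG : G.Connected)
    (hV : Fintype.card V = k + 2) : rvx G k ≤ max 1 #G.cutVertices := by
  obtain ⟨c, hc, hlt⟩ := G.cutVertices.exists_injOn_lt_max_one_card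
  refine Nat.sInf_le (hasRvxColoring_of_injOn_cutVertex hG hV (fun a ha b hb => ?_) hlt)
  exact hc (mem_cutVertices.mpr ha) (mem_cutVertices.mpr hb)

end rvx

/-- if `G` and `Ḡ` are connected of order `5`, then
`rvx_3(G) + rvx_3(Ḡ) ≤ 4`. -/
theorem rvx_three_order_five {V : Type*} [Fintype V] (G : SimpleGraph V)
    (hV : Fintype.card V = 5) (h1 : G.Connected) (h2 : Gᶜ.Connected) :
    rvx G 3 + rvx Gᶜ 3 ≤ 4 := by
  have hG := rvx_le_max_one_card_cutVertices (k := 3) h1 hV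
  have hGc := rvx_le_max_one_card_cutVertices (k := 3) h2 hV
  have hsum := SimpleGraph.max_one_card_cutVertices_add_compl_le_four hV h1 h2
  omega
end

section
/- For the path G = P_n with n ≥ 5, rvx_3(G) + rvx_3(\bar{G}) = n − 1; in particular rvx_3(P_n) = n − 2 and rvx_3(\bar{P_n}) = 1. -/
open SimpleGraph

theorem Finset.exists_lt_lt_eq_of_card_eq_three {α : Type*} [LinearOrder α] {S : Finset α}
    (h : S.card = 3) : ∃ x y z : α, x < y ∧ y < z ∧ S = {x, y, z} := by
  set f := S.orderEmbOfFin h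
  refine ⟨f 0, f 1, f 2, f.strictMono (by decide), f.strictMono (by decide), ?_⟩
  ext v
  constructor
  · intro hv
    obtain ⟨i, rfl⟩ : v ∈ Set.range f := by rw [S.range_orderEmbOfFin h]; exact hv
    fin_cases i <;> simp
  · simp only [Finset.mem_insert, Finset.mem_singleton]
    rintro (rfl | rfl | rfl) <;> exact S.orderEmbOfFin_mem h _

theorem hasRvxColoring_one_of_forall_exists {V : Type*} {G : SimpleGraph V} {k : ℕ}
    (h : ∀ S : Finset V, S.card = k →
      ∃ T : G.Subgraph, T.Connected ∧ ↑S ⊆ T.verts ∧ (T.verts \ ↑S).Subsingleton) :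
    hasRvxColoring G k 1 := by
  refine ⟨fun _ => 0, fun S hS => ?_⟩
  obtain ⟨T, hT, hST, hsub⟩ := h S hS
  exact ⟨T, hT, hST, fun u hu v hv _ => hsub hu hv, fun _ _ => Nat.one_pos⟩

theorem exists_connected_verts_eq_of_hasRvxColoring_zero {V : Type*} {G : SimpleGraph V} {k : ℕ}
    (h : hasRvxColoring G k 0) (S : Finset V) (hS : S.card = k) :
    ∃ T : G.Subgraph, T.Connected ∧ T.verts = ↑S := by
  obtain ⟨c, hc⟩ := h
  obtain ⟨T, hT, hST, -, hlt⟩ := hc S hS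
  refine ⟨T, hT, hST.antisymm' fun v hv => ?_⟩
  by_contra hvS
  exact Nat.not_lt_zero _ (hlt v ⟨hv, hvS⟩)

theorem pathGraph_induce_Icc_connected {n : ℕ} {a b : Fin n} (hab : a ≤ b) :
    ((pathGraph n).induce (Set.Icc a b)).Connected := by
  obtain ⟨k, hk⟩ := Nat.exists_eq_add_of_le (Fin.le_def.mp hab)
  induction k generalizing b with
  | zero =>
    obtain rfl : b = a := Fin.ext hk
    rw [Set.Icc_self]
    exact ⟨.of_subsingleton⟩
  | succ k ih =>
    set b' : Fin n := ⟨a.val + k, by omega⟩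
    have hIcc : Set.Icc a b = Set.Icc a b' ∪ {b', b} := by
      ext v
      simp only [Set.mem_Icc, Set.mem_union, Set.mem_insert_iff, Set.mem_singleton_iff,
        Fin.le_def, Fin.ext_iff, b']
      omega
    have hab' : a ≤ b' := Fin.le_def.mpr (Nat.le_add_right _ _)
    rw [hIcc]
    refine induce_union_connected (ih hab' rfl).preconnected
      (induce_pair_connected_of_adj ?_).preconnected ⟨b', Set.right_mem_Icc.mpr hab', by simp⟩
    simp only [pathGraph_adj, b']
    omega

theorem pathGraph_Icc_subset_support {n : ℕ} {a b : Fin n} (p : (pathGraph n).Walk a b) :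
    Set.Icc a b ⊆ {v | v ∈ p.support} := by
  induction p with
  | nil => simp
  | @cons a u b hadj p ih =>
    rintro v ⟨hav, hvb⟩
    rw [pathGraph_adj] at hadj
    rcases eq_or_ne v a with rfl | hva
    · simp
    · have huv : u ≤ v := by
        rw [Fin.le_def]; rw [Fin.le_def] at hav; rw [Ne, Fin.ext_iff] at hva; omega
      exact List.mem_cons_of_mem _ (ih ⟨huv, hvb⟩)

theorem pathGraph_ordConnected_verts {n : ℕ} {T : (pathGraph n).Subgraph} (hT : T.Connected) :
    T.verts.OrdConnected := by
  refine ⟨fun x hx y hy v hv => ?_⟩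
  obtain ⟨p, hp⟩ := (T.preconnected_iff_forall_exists_walk_subgraph.mp hT.preconnected) hx hy
  exact hp.1 (p.mem_verts_toSubgraph.mpr (pathGraph_Icc_subset_support p hv))

theorem hasRvxColoring_pathGraph {n k : ℕ} (hk : 0 < k) :
    hasRvxColoring (pathGraph n) k (n - 2) := by
  refine ⟨fun v => v.val - 1, fun S hS => ?_⟩
  have hne : S.Nonempty := Finset.card_pos.mp (hS ▸ hk)
  set a := S.min' hne
  set b := S.max' hne
  have hinner : ∀ v ∈ Set.Icc a b \ ↑S, 1 ≤ v.val ∧ v.val ≤ n - 2 := by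
    rintro v ⟨⟨hav, hvb⟩, hvS⟩
    have hav' : a < v := lt_of_le_of_ne hav fun h => hvS (h ▸ S.min'_mem hne)
    have hvb' : v < b := lt_of_le_of_ne hvb fun h => hvS (h ▸ S.max'_mem hne)
    rw [Fin.lt_def] at hav' hvb'
    omega
  refine ⟨(⊤ : (pathGraph n).Subgraph).induce (Set.Icc a b),
    connected_induce_iff.mp (pathGraph_induce_Icc_connected (S.min'_le _ (S.max'_mem hne))),
    fun s hs => ⟨S.min'_le s hs, S.le_max' s hs⟩, fun u hu v hv huv => ?_,
    fun v hv => ?_⟩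
  · have := hinner u hu
    have := hinner v hv
    exact Fin.ext (by simp only at huv; omega)
  · have := hinner v hv
    simp only
    omega

theorem le_of_hasRvxColoring_pathGraph {n m : ℕ} (hn : 5 ≤ n)
    (h : hasRvxColoring (pathGraph n) 3 m) : n - 2 ≤ m := by
  obtain ⟨c, hc⟩ := h
  set I : Finset (Fin n) := Finset.Icc ⟨1, by omega⟩ ⟨n - 2, by omega⟩
  have hI : I.card = n - 2 := by simp [I]
  have hmemI : ∀ v : Fin n, v ∈ I ↔ 1 ≤ v.val ∧ v.val ≤ n - 2 := fun v => Finset.mem_Icc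
  -- a tree for `{0, k, n - 1}` is the whole path, so it makes `I \ {k}` rainbow
  have rainbow : ∀ i ∈ I, ∀ j ∈ I, (c i = c j → i = j) ∧ c i < m := by
    intro i hi j hj
    obtain ⟨k, hk⟩ : (I \ {i, j}).Nonempty := by
      rw [← Finset.card_pos]
      have := Finset.le_card_sdiff {i, j} I
      have := Finset.card_le_two (a := i) (b := j)
      omega
    simp only [Finset.mem_sdiff, Finset.mem_insert, Finset.mem_singleton, not_or,
      hmemI] at hk hi hj
    set first : Fin n := ⟨0, by omega⟩
    set last : Fin n := ⟨n - 1, by omega⟩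
    set S : Finset (Fin n) := {first, k, last}
    have hS : S.card = 3 := by
      refine Finset.card_eq_three.mpr ⟨_, _, _, ?_, ?_, ?_, rfl⟩ <;>
        simp only [first, last, ne_eq, Fin.ext_iff] <;> omega
    obtain ⟨T, hT, hST, hinj, hlt⟩ := hc S hS
    have hfirst : first ∈ T.verts := hST (by simp [S])
    have hlast : last ∈ T.verts := hST (by simp [S])
    have hTS : ∀ v : Fin n, 1 ≤ v.val → v.val ≤ n - 2 → v ≠ k → v ∈ T.verts \ ↑S := by
      intro v hv1 hv2 hvk
      refine ⟨(pathGraph_ordConnected_verts hT).out hfirst hlast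
        ⟨Fin.le_def.mpr (Nat.zero_le _), Fin.le_def.mpr (by simp only [last]; omega)⟩, ?_⟩
      simp only [S, first, last, Finset.coe_insert, Finset.coe_singleton, Set.mem_insert_iff,
        Set.mem_singleton_iff, Fin.ext_iff, hvk, false_or]
      omega
    have hiT := hTS i hi.1 hi.2 (Ne.symm hk.2.1)
    exact ⟨fun hij => hinj hiT (hTS j hj.1 hj.2 (Ne.symm hk.2.2)) hij, hlt i hiT⟩
  calc n - 2 = I.card := hI.symm
    _ ≤ (Finset.range m).card :=
      Finset.card_le_card_of_injOn c (fun i hi => Finset.mem_range.mpr (rainbow i hi i hi).2)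
        fun i hi j hj hij => (rainbow i hi j hj).1 hij
    _ = m := Finset.card_range m

theorem compl_pathGraph_adj_of_add_two_le {n : ℕ} {u v : Fin n} (h : u.val + 2 ≤ v.val) :
    (pathGraph n)ᶜ.Adj u v := by
  rw [compl_adj, pathGraph_adj, Ne, Fin.ext_iff]
  omega

theorem not_hasRvxColoring_compl_pathGraph_zero {n : ℕ} (hn : 3 ≤ n) :
    ¬ hasRvxColoring (pathGraph n)ᶜ 3 0 := by
  intro h
  set S : Finset (Fin n) := {⟨0, by omega⟩, ⟨1, by omega⟩, ⟨2, by omega⟩}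
  obtain ⟨T, hT, hTS⟩ := exists_connected_verts_eq_of_hasRvxColoring_zero h S (by
    refine Finset.card_eq_three.mpr ⟨_, _, _, ?_, ?_, ?_, rfl⟩ <;> simp [Fin.ext_iff])
  have h1 : (⟨1, by omega⟩ : Fin n) ∈ T.verts := by simp [hTS, S]
  have : Nontrivial T.verts := by
    rw [Set.nontrivial_coe_sort, hTS]
    exact ⟨⟨0, by omega⟩, by simp [S], ⟨1, by omega⟩, by simp [S], by simp [Fin.ext_iff]⟩
  obtain ⟨u, hu⟩ := hT.preconnected.exists_adj_of_nontrivial ⟨_, h1⟩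
  have huS : u ∈ T.verts := hu.snd_mem
  have hadj := hu.adj_sub
  simp only [hTS, S, Finset.coe_insert, Finset.coe_singleton, Set.mem_insert_iff,
    Set.mem_singleton_iff] at huS
  rcases huS with rfl | rfl | rfl <;> simp [compl_adj, pathGraph_adj] at hadj

theorem hasRvxColoring_compl_pathGraph_one {n : ℕ} (hn : 4 ≤ n) :
    hasRvxColoring (pathGraph n)ᶜ 3 1 := by
  refine hasRvxColoring_one_of_forall_exists fun S hS => ?_
  obtain ⟨x, y, z, hxy, hyz, rfl⟩ := Finset.exists_lt_lt_eq_of_card_eq_three hS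
  rw [Fin.lt_def] at hxy hyz
  have hz := z.isLt
  suffices ∃ (w u v : Fin n) (p : (pathGraph n)ᶜ.Walk u v),
      ({x, y, z} : Set (Fin n)) ⊆ {v | v ∈ p.support} ∧ {v | v ∈ p.support} ⊆ {w, x, y, z} by
    obtain ⟨w, u, v, p, hSp, hpS⟩ := this
    refine ⟨p.toSubgraph, p.toSubgraph_connected, by simpa [p.verts_toSubgraph] using hSp,
      (Set.subsingleton_singleton (a := w)).anti fun v ⟨hv, hvS⟩ => ?_⟩
    simp only [p.verts_toSubgraph, Finset.coe_insert, Finset.coe_singleton] at hv hvS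
    exact (hpS hv).resolve_right hvS
  have adj {u v : Fin n} (h : u.val + 2 ≤ v.val) := compl_pathGraph_adj_of_add_two_le h
  by_cases hxy2 : x.val + 2 ≤ y.val
  · exact ⟨x, y, z, .cons (adj hxy2).symm (.cons (adj (by omega)) .nil),
      by simp [Set.insert_subset_iff], fun v => by simp; tauto⟩
  by_cases hyz2 : y.val + 2 ≤ z.val
  · exact ⟨x, x, y, .cons (adj (by omega)) (.cons (adj hyz2).symm .nil),
      by simp [Set.insert_subset_iff], fun v => by simp; tauto⟩
  -- three consecutive vertices need one Steiner vertex `w`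
  by_cases hx : x.val = 0
  · set w : Fin n := ⟨3, by omega⟩
    have hxw : x.val + 2 ≤ w.val := by simp only [w]; omega
    have hyw : y.val + 2 ≤ w.val := by simp only [w]; omega
    exact ⟨w, z, y, .cons (adj (by omega)).symm (.cons (adj hxw) (.cons (adj hyw).symm .nil)),
      by simp [Set.insert_subset_iff], fun v => by simp; tauto⟩
  · set w : Fin n := ⟨0, by omega⟩
    have hwz : w.val + 2 ≤ z.val := by simp only [w]; omega
    have hwy : w.val + 2 ≤ y.val := by simp only [w]; omega
    exact ⟨w, x, y, .cons (adj (by omega)) (.cons (adj hwz).symm (.cons (adj hwy) .nil)),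
      by simp [Set.insert_subset_iff], fun v => by simp; tauto⟩

/-- for the path `P_n` with `n ≥ 5`, `rvx_3(P_n) = n - 2`,
`rvx_3(complement of P_n) = 1`, and their sum is `n - 1`. -/
theorem rvx_three_path_complement (n : ℕ) (hn : 5 ≤ n) :
    rvx (SimpleGraph.pathGraph n) 3 = n - 2 ∧
    rvx (SimpleGraph.pathGraph n)ᶜ 3 = 1 ∧
    rvx (SimpleGraph.pathGraph n) 3 + rvx (SimpleGraph.pathGraph n)ᶜ 3 = n - 1 := by
  have hpath : rvx (pathGraph n) 3 = n - 2 :=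
    IsLeast.csInf_eq ⟨hasRvxColoring_pathGraph (by norm_num),
      fun _ => le_of_hasRvxColoring_pathGraph hn⟩
  have hcompl : rvx (pathGraph n)ᶜ 3 = 1 :=
    IsLeast.csInf_eq ⟨hasRvxColoring_compl_pathGraph_one (by omega), fun m hm =>
      Nat.one_le_iff_ne_zero.mpr fun h0 =>
        not_hasRvxColoring_compl_pathGraph_zero (by omega) (h0 ▸ hm)⟩
  exact ⟨hpath, hcompl, by omega⟩
end
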